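/- Let b ≥ 0 and p > 2 be real numbers, and let V : ℝ² → ℝ be measurable with 0 < V₀ ≤ V(x) ≤ V_∞ for all x ∈ ℝ² (for some constants V₀, V_∞). Let u : ℝ² → ℝ be continuously differentiable with ∫_{ℝ²} u² dx > 0, such that the functions x ↦ ‖∇u(x)‖², x ↦ u(x)² and x ↦ |u(x)|^p are integrable on ℝ² and (x,y) ↦ |log(‖x−y‖)|·u(x)²u(y)² is integrable on ℝ²×ℝ². For t > 0 define u_t : ℝ² → ℝ by u_t(x) = t²u(tx). Then I(u_t) → −∞ as t → ∞, where I(u_t) = ½∫_{ℝ²}(‖∇u_t(x)‖² + V(x)u_t(x)²)dx + (1/(8π))∬_{ℝ²×ℝ²} log(‖x−y‖)u_t(x)²u_t(y)² dxdy − (b/p)∫_{ℝ²}|u_t(x)|^p dx. -/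

import Mathlib

open MeasureTheory Filter
open scoped InnerProductSpace

abbrev E2 := EuclideanSpace ℝ (Fin 2)

/-- The energy functional `I` of the planar Schrödinger–Poisson problem. -/
noncomputable def energyI (b p : ℝ) (V u : E2 → ℝ) : ℝ :=
  (1 / 2) * (∫ x : E2, (‖gradient u x‖ ^ 2 + V x * (u x) ^ 2)) +
    (1 / (8 * Real.pi)) *
      (∫ z : E2 × E2, Real.log ‖z.1 - z.2‖ * (u z.1) ^ 2 * (u z.2) ^ 2) -
    (b / p) * (∫ x : E2, |u x| ^ p)

/-!
Under `u_t(x) = t²u(tx)` the kinetic term scales like `t⁴`, the potential term is `O(t²)`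
because `V` is bounded, and the `|u|^p` term only lowers the energy. The divergence comes from
the logarithmic kernel: since `log ‖t x - t y‖ = log t + log ‖x - y‖` off the diagonal, which is
null, the interaction term equals `t⁴ (A - log t ‖u‖₂⁴)`. Hence
`I(u_t) ≤ t⁴ (C - ‖u‖₂⁴ / (8π) · log t) + O(t²)`, which tends to `-∞`.
-/

open Module Real

theorem gradient_const_mul_comp_smul {E : Type*} [NormedAddCommGroup E] [InnerProductSpace ℝ E]
    [CompleteSpace E] {u : E → ℝ} {x : E} (c t : ℝ) (hu : DifferentiableAt ℝ u (t • x)) :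
    gradient (fun x => c * u (t • x)) x = (c * t) • gradient u (t • x) := by
  have h : HasFDerivAt (fun x => c * u (t • x))
      (c • (fderiv ℝ u (t • x)).comp (t • ContinuousLinearMap.id ℝ E)) x :=
    (hu.hasFDerivAt.comp x ((hasFDerivAt_id x).const_smul t)).const_mul c
  have hL : c • (fderiv ℝ u (t • x)).comp (t • ContinuousLinearMap.id ℝ E) =
      (c * t) • fderiv ℝ u (t • x) := by
    ext v
    simp only [smul_apply, ContinuousLinearMap.comp_apply,
      ContinuousLinearMap.id_apply, map_smul, smul_eq_mul]
    ring
  rw [gradient, h.fderiv, hL, map_smul, gradient]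

theorem norm_sq_gradient_const_mul_comp_smul {E : Type*} [NormedAddCommGroup E]
    [InnerProductSpace ℝ E] [CompleteSpace E] {u : E → ℝ} {x : E} (c t : ℝ)
    (hu : DifferentiableAt ℝ u (t • x)) :
    ‖gradient (fun x => c * u (t • x)) x‖ ^ 2 = (c * t) ^ 2 * ‖gradient u (t • x)‖ ^ 2 := by
  rw [gradient_const_mul_comp_smul c t hu, norm_smul, mul_pow, Real.norm_eq_abs, sq_abs]

theorem ae_fst_ne_snd {α : Type*} [MeasurableSpace α] [MeasurableEq α] {μ ν : Measure α}
    [SFinite ν] [NullSingletonClass ν] :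
    ∀ᵐ z ∂(μ.prod ν), z.1 ≠ z.2 := by
  simp only [ae_iff, not_not]
  refine (Measure.measure_prod_null (measurableSet_diagonal (α := α))).2
    (Eventually.of_forall fun x => ?_)
  simp [Set.preimage, Set.diagonal]

section Rescaling

variable {E : Type*} [NormedAddCommGroup E] [NormedSpace ℝ E] [FiniteDimensional ℝ E]
  [MeasurableSpace E] [BorelSpace E] (μ : Measure E) [μ.IsAddHaarMeasure]

theorem integral_const_mul_comp_smul (f : E → ℝ) (c : ℝ) {t : ℝ} (ht : 0 < t) :
    ∫ x, c * f (t • x) ∂μ = c / t ^ finrank ℝ E * ∫ x, f x ∂μ := by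
  rw [integral_const_mul, Measure.integral_comp_smul_of_nonneg μ f t (hR := ht.le), smul_eq_mul,
    div_eq_mul_inv, mul_assoc]

theorem integral_sq_const_mul_comp_smul (u : E → ℝ) (c : ℝ) {t : ℝ} (ht : 0 < t) :
    ∫ x, (c * u (t • x)) ^ 2 ∂μ = c ^ 2 / t ^ finrank ℝ E * ∫ x, u x ^ 2 ∂μ := by
  simp_rw [mul_pow]
  exact integral_const_mul_comp_smul μ (fun x => u x ^ 2) _ ht

theorem integral_log_norm_sub_mul_sq_const_mul_comp_smul [Nontrivial E] {u : E → ℝ} (c : ℝ)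
    {t : ℝ} (ht : 0 < t)
    (hlog : Integrable (fun z : E × E => log ‖z.1 - z.2‖ * u z.1 ^ 2 * u z.2 ^ 2) (μ.prod μ))
    (hsq : Integrable (fun x => u x ^ 2) μ) :
    ∫ z, log ‖z.1 - z.2‖ * (c * u (t • z.1)) ^ 2 * (c * u (t • z.2)) ^ 2 ∂(μ.prod μ) =
      c ^ 4 / t ^ (2 * finrank ℝ E) *
        (∫ z, log ‖z.1 - z.2‖ * u z.1 ^ 2 * u z.2 ^ 2 ∂(μ.prod μ) -
          log t * (∫ x, u x ^ 2 ∂μ) ^ 2) := by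
  set F : E × E → ℝ := fun w => log ‖w.1 - w.2‖ * u w.1 ^ 2 * u w.2 ^ 2 -
    log t * (u w.1 ^ 2 * u w.2 ^ 2)
  have hscale : (fun z : E × E => log ‖z.1 - z.2‖ * (c * u (t • z.1)) ^ 2 * (c * u (t • z.2)) ^ 2)
      =ᵐ[μ.prod μ] fun z => c ^ 4 * F (t • z) := by
    filter_upwards [ae_fst_ne_snd] with z hz
    have hne : ‖z.1 - z.2‖ ≠ 0 := by simpa [sub_eq_zero] using hz
    simp only [F, Prod.smul_fst, Prod.smul_snd, ← smul_sub, norm_smul, Real.norm_of_nonneg ht.le,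
      log_mul ht.ne' hne]
    ring
  have hF : ∫ z, F z ∂(μ.prod μ) =
      ∫ z, log ‖z.1 - z.2‖ * u z.1 ^ 2 * u z.2 ^ 2 ∂(μ.prod μ) - log t * (∫ x, u x ^ 2 ∂μ) ^ 2 := by
    rw [integral_sub hlog ((hsq.mul_prod hsq).const_mul _), integral_const_mul,
      integral_prod_mul (fun x => u x ^ 2) (fun x => u x ^ 2), sq]
  rw [integral_congr_ae hscale, integral_const_mul_comp_smul (μ.prod μ) F _ ht, hF,
    finrank_prod, two_mul]

end Rescaling

theorem tendsto_pow_four_mul_sub_log_add_atBot (C D : ℝ) {c : ℝ} (hc : 0 < c) :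
    Tendsto (fun t : ℝ => t ^ 4 * (C - c * log t) + D * t ^ 2) atTop atBot := by
  have hinv : Tendsto (fun t : ℝ => (t ^ 2)⁻¹) atTop (nhds 0) :=
    tendsto_inv_atTop_zero.comp (tendsto_pow_atTop two_ne_zero)
  have hlim : Tendsto (fun t : ℝ => C + D * (t ^ 2)⁻¹ + -(c * log t)) atTop atBot :=
    (tendsto_const_nhds.add (tendsto_const_nhds.mul hinv)).add_atBot
      (tendsto_neg_atTop_atBot.comp (tendsto_log_atTop.const_mul_atTop hc))
  refine ((tendsto_pow_atTop four_ne_zero).atTop_mul_atBot₀ hlim).congr' ?_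
  filter_upwards [eventually_ne_atTop 0] with t ht
  field_simp
  ring

theorem energyI_rescale_le {b p : ℝ} (hbp : 0 ≤ b / p) {V : E2 → ℝ}
    (hV : Measurable V) {V₀ V_inf : ℝ} (hVbd : ∀ x, V₀ ≤ V x ∧ V x ≤ V_inf) {u : E2 → ℝ}
    (hu : Differentiable ℝ u) (hgrad : Integrable (fun x => ‖gradient u x‖ ^ 2))
    (hsq : Integrable (fun x => u x ^ 2))
    (hlog : Integrable (fun z : E2 × E2 => log ‖z.1 - z.2‖ * u z.1 ^ 2 * u z.2 ^ 2))
    {t : ℝ} (ht : 0 < t) :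
    energyI b p V (fun x => t ^ 2 * u (t • x)) ≤
      t ^ 4 * ((∫ x, ‖gradient u x‖ ^ 2) / 2 +
          (∫ z : E2 × E2, log ‖z.1 - z.2‖ * u z.1 ^ 2 * u z.2 ^ 2) / (8 * π) -
          (∫ x, u x ^ 2) ^ 2 / (8 * π) * log t) +
        V_inf * (∫ x, u x ^ 2) / 2 * t ^ 2 := by
  have hdim : finrank ℝ E2 = 2 := finrank_euclideanSpace_fin
  have hgrad_t : ∀ x, ‖gradient (fun x => t ^ 2 * u (t • x)) x‖ ^ 2 =
      (t ^ 2 * t) ^ 2 * ‖gradient u (t • x)‖ ^ 2 := fun x =>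
    norm_sq_gradient_const_mul_comp_smul _ _ (hu _)
  have hgrad_t_int : Integrable (fun x => ‖gradient (fun x => t ^ 2 * u (t • x)) x‖ ^ 2) := by
    simp_rw [hgrad_t]
    exact (hgrad.comp_smul ht.ne').const_mul _
  have hsq_t : Integrable (fun x : E2 => (t ^ 2 * u (t • x)) ^ 2) := by
    simp_rw [mul_pow]
    exact (hsq.comp_smul ht.ne').const_mul _
  have hVsq_t : Integrable (fun x : E2 => V x * (t ^ 2 * u (t • x)) ^ 2) :=
    hsq_t.bdd_mul hV.aestronglyMeasurable
      (Eventually.of_forall fun x => abs_le_max_abs_abs (hVbd x).1 (hVbd x).2)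
  have hkinetic : ∫ x, ‖gradient (fun x => t ^ 2 * u (t • x)) x‖ ^ 2 =
      t ^ 4 * ∫ x, ‖gradient u x‖ ^ 2 := by
    simp_rw [hgrad_t]
    rw [integral_const_mul_comp_smul _ (fun x => ‖gradient u x‖ ^ 2) _ ht, hdim]
    field_simp
  have hpotential : ∫ x, V x * (t ^ 2 * u (t • x)) ^ 2 ≤ V_inf * (t ^ 2 * ∫ x, u x ^ 2) := by
    calc ∫ x, V x * (t ^ 2 * u (t • x)) ^ 2
        ≤ ∫ x, V_inf * (t ^ 2 * u (t • x)) ^ 2 :=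
          integral_mono hVsq_t (hsq_t.const_mul _)
            fun x => mul_le_mul_of_nonneg_right (hVbd x).2 (sq_nonneg _)
      _ = V_inf * (t ^ 2 * ∫ x, u x ^ 2) := by
          rw [integral_const_mul, integral_sq_const_mul_comp_smul _ _ _ ht, hdim]
          field_simp
  have hinteraction : ∫ z : E2 × E2, log ‖z.1 - z.2‖ * (t ^ 2 * u (t • z.1)) ^ 2 *
        (t ^ 2 * u (t • z.2)) ^ 2 =
      t ^ 4 * ((∫ z : E2 × E2, log ‖z.1 - z.2‖ * u z.1 ^ 2 * u z.2 ^ 2) -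
        log t * (∫ x, u x ^ 2) ^ 2) := by
    rw [Measure.volume_eq_prod] at hlog ⊢
    rw [integral_log_norm_sub_mul_sq_const_mul_comp_smul _ _ ht hlog hsq, hdim]
    field_simp
  have hnonlinear : 0 ≤ (b / p) * ∫ x, |t ^ 2 * u (t • x)| ^ p :=
    mul_nonneg hbp (integral_nonneg fun x => by positivity)
  rw [energyI, integral_add hgrad_t_int hVsq_t, hkinetic, hinteraction]
  calc _ ≤ 1 / 2 * (t ^ 4 * (∫ x, ‖gradient u x‖ ^ 2) + V_inf * (t ^ 2 * ∫ x, u x ^ 2)) +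
        1 / (8 * π) * (t ^ 4 * ((∫ z : E2 × E2, log ‖z.1 - z.2‖ * u z.1 ^ 2 * u z.2 ^ 2) -
          log t * (∫ x, u x ^ 2) ^ 2)) := by linarith
    _ = _ := by ring

theorem stmt10_general (b p : ℝ) (hb : 0 ≤ b) (hp : 2 < p)
    (V : E2 → ℝ) (hVmeas : Measurable V)
    (V₀ V_inf : ℝ) (hVbd : ∀ x, V₀ ≤ V x ∧ V x ≤ V_inf)
    (u : E2 → ℝ) (hu : ContDiff ℝ 1 u)
    (hupos : 0 < ∫ x : E2, (u x) ^ 2)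
    (hint1 : Integrable (fun x : E2 => ‖gradient u x‖ ^ 2))
    (hint2 : Integrable (fun x : E2 => (u x) ^ 2))
    (hint4 : Integrable
      (fun z : E2 × E2 => |Real.log ‖z.1 - z.2‖| * (u z.1) ^ 2 * (u z.2) ^ 2)) :
    Tendsto (fun t : ℝ => energyI b p V (fun x => t ^ 2 * u (t • x))) atTop atBot := by
  have hbp : 0 ≤ b / p := div_nonneg hb (by linarith)
  have hcont : Continuous u := hu.continuous
  have hlog : Integrable (fun z : E2 × E2 => log ‖z.1 - z.2‖ * u z.1 ^ 2 * u z.2 ^ 2) := by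
    have hmeas : Measurable fun z : E2 × E2 => log ‖z.1 - z.2‖ * u z.1 ^ 2 * u z.2 ^ 2 :=
      ((measurable_log.comp (by fun_prop)).mul (by fun_prop)).mul (by fun_prop)
    refine (integrable_norm_iff hmeas.aestronglyMeasurable).1 ?_
    simpa only [norm_mul, norm_pow, Real.norm_eq_abs, sq_abs] using hint4
  refine tendsto_atBot_mono' atTop ?_ (tendsto_pow_four_mul_sub_log_add_atBot ?C ?D
    (c := (∫ x, u x ^ 2) ^ 2 / (8 * π)) (by positivity))
  filter_upwards [eventually_gt_atTop 0] with t ht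
  exact energyI_rescale_le hbp hVmeas hVbd
    (hu.differentiable one_ne_zero) hint1 hint2 hlog ht

/-- Lemma 2.6: along the fibre `u_t(x) = t²u(tx)`, the energy `I(u_t)` tends to `−∞`
as `t → ∞`. -/
theorem stmt10 (b p : ℝ) (hb : 0 ≤ b) (hp : 2 < p)
    (V : E2 → ℝ) (hVmeas : Measurable V)
    (V₀ V_inf : ℝ) (hV₀ : 0 < V₀) (hVbd : ∀ x, V₀ ≤ V x ∧ V x ≤ V_inf)
    (u : E2 → ℝ) (hu : ContDiff ℝ 1 u)
    (hupos : 0 < ∫ x : E2, (u x) ^ 2)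
    (hint1 : Integrable (fun x : E2 => ‖gradient u x‖ ^ 2))
    (hint2 : Integrable (fun x : E2 => (u x) ^ 2))
    (hint3 : Integrable (fun x : E2 => |u x| ^ p))
    (hint4 : Integrable
      (fun z : E2 × E2 => |Real.log ‖z.1 - z.2‖| * (u z.1) ^ 2 * (u z.2) ^ 2)) :
    Tendsto (fun t : ℝ => energyI b p V (fun x => t ^ 2 * u (t • x))) atTop atBot :=
  stmt10_general b p hb hp V hVmeas V₀ V_inf hVbd u hu hupos hint1 hint2 hint4
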